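/- Let A = [[λ₁, 0], [0, λ₂]] be a real diagonal 2×2 matrix and B = [[0, b], [c, 0]] a real antidiagonal 2×2 matrix, with λ₁, λ₂, b, c arbitrary real numbers. Then the generalized spectral radius of {A, B} equals max{ρ(A), ρ(B)} = max{|λ₁|, |λ₂|, √(|b·c|)}; in particular {A, B} has the spectral finiteness property. -/

import Mathlib

/-!
Write `D ↦ D'` for swapping the two entries of a diagonal matrix. Then `B D = D' B` and
`B² = bc I`, so every product of `n` factors from `{A, B}` is diagonal or antidiagonal. With
`r = max {|λ₁|, |λ₂|, √|bc|}`, induction on `n` shows that a diagonal product has entries of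
modulus at most `rⁿ`, while an antidiagonal product `!![0, x; y, 0]` has
`|x| ≤ rⁿ⁻¹ |b|` and `|y| ≤ rⁿ⁻¹ |c|`. In both cases its spectral radius is at most `rⁿ`,
so `ρ̂ ≤ r`, and `r = max {ρ(A), ρ(B)}` is attained by a single factor.
-/

open Matrix

/-- The spectral radius of a real 2×2 matrix: the maximum modulus of its
complex eigenvalues. -/
noncomputable def specRad (M : Matrix (Fin 2) (Fin 2) ℝ) : ℝ :=
  (spectralRadius ℂ (M.map Complex.ofReal)).toReal

/-- `prodsOfLen 𝒜 n` is the set `𝒜ⁿ` of all products of `n` matrices taken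
from `𝒜`. -/
def prodsOfLen (𝒜 : Set (Matrix (Fin 2) (Fin 2) ℝ)) (n : ℕ) :
    Set (Matrix (Fin 2) (Fin 2) ℝ) :=
  {M | ∃ l : List (Matrix (Fin 2) (Fin 2) ℝ),
    l.length = n ∧ (∀ X ∈ l, X ∈ 𝒜) ∧ M = l.prod}

/-- The generalized spectral radius of `𝒜`:
`sup_{n ≥ 1} max_{M ∈ 𝒜ⁿ} ρ(M)^(1/n)`. -/
noncomputable def gsr (𝒜 : Set (Matrix (Fin 2) (Fin 2) ℝ)) : ℝ :=
  sSup {x : ℝ | ∃ n : ℕ, 1 ≤ n ∧ ∃ M ∈ prodsOfLen 𝒜 n,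
    x = specRad M ^ ((1 : ℝ) / n)}

/-- `𝒜` has the spectral finiteness property if its generalized spectral
radius is realized as `ρ(M)^(1/n)` for some `n ≥ 1` and some `M ∈ 𝒜ⁿ`. -/
def hasSpectralFiniteness (𝒜 : Set (Matrix (Fin 2) (Fin 2) ℝ)) : Prop :=
  ∃ n : ℕ, 1 ≤ n ∧ ∃ M ∈ prodsOfLen 𝒜 n, gsr 𝒜 = specRad M ^ ((1 : ℝ) / n)

open scoped Pointwise NNReal ENNReal

theorem prodsOfLen_zero (𝒜 : Set (Matrix (Fin 2) (Fin 2) ℝ)) : prodsOfLen 𝒜 0 = {1} := by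
  ext M
  simp [prodsOfLen, List.length_eq_zero_iff, eq_comm (a := M)]

theorem prodsOfLen_succ (𝒜 : Set (Matrix (Fin 2) (Fin 2) ℝ)) (n : ℕ) :
    prodsOfLen 𝒜 (n + 1) = 𝒜 * prodsOfLen 𝒜 n := by
  ext M
  constructor
  · rintro ⟨_ | ⟨X, l⟩, hlen, hmem, rfl⟩
    · simp at hlen
    · exact ⟨X, hmem X List.mem_cons_self, l.prod,
        ⟨l, by simpa using hlen, fun Y hY => hmem Y (List.mem_cons_of_mem X hY), rfl⟩, rfl⟩
  · rintro ⟨X, hX, _, ⟨l, rfl, hmem, rfl⟩, rfl⟩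
    exact ⟨X :: l, rfl, by simpa [hX] using hmem, rfl⟩

theorem specRad_nonneg (M : Matrix (Fin 2) (Fin 2) ℝ) : 0 ≤ specRad M :=
  ENNReal.toReal_nonneg

theorem spectralRadius_eq_of_forall_nnnorm_eq {𝕜 A : Type*} [NormedField 𝕜] [Ring A]
    [Algebra 𝕜 A] {a : A} {r : ℝ≥0} (hne : (spectrum 𝕜 a).Nonempty)
    (h : ∀ k ∈ spectrum 𝕜 a, ‖k‖₊ = r) : spectralRadius 𝕜 a = r := by
  rw [spectralRadius, ← biSup_const (a := (r : ℝ≥0∞)) hne]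
  exact iSup_congr fun k => iSup_congr fun hk => by rw [h k hk]

theorem specRad_diag (x y : ℝ) : specRad !![x, 0; 0, y] = max |x| |y| := by
  have hmap : (!![x, 0; 0, y]).map Complex.ofReal = diagonal ![(x : ℂ), y] := by
    ext i j; fin_cases i <;> fin_cases j <;> simp
  rw [specRad, hmap, spectralRadius, spectrum_diagonal, range_cons_cons_empty, iSup_insert,
    iSup_singleton, ← ENNReal.coe_max, ENNReal.coe_toReal, NNReal.coe_max]
  simp

theorem spectrum_antidiag (x y : ℂ) : spectrum ℂ !![0, x; y, 0] = {z | z ^ 2 = x * y} := by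
  ext z
  simp [mem_spectrum_iff_isRoot_charpoly, charpoly_fin_two, trace_fin_two, ← sub_eq_add_neg,
    sub_eq_zero]

theorem specRad_antidiag (x y : ℝ) : specRad !![0, x; y, 0] = √|x * y| := by
  have hmap : (!![0, x; y, 0]).map Complex.ofReal = !![0, (x : ℂ); y, 0] := by
    ext i j; fin_cases i <;> fin_cases j <;> simp
  have hnorm : ∀ z ∈ spectrum ℂ !![0, (x : ℂ); y, 0], ‖z‖₊ = NNReal.sqrt ‖x * y‖₊ := by
    intro z hz
    rw [spectrum_antidiag, Set.mem_ofPred_eq] at hz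
    rw [← NNReal.sqrt_sq ‖z‖₊, ← nnnorm_pow, hz, ← Complex.ofReal_mul, Complex.nnnorm_real]
  have hne : (spectrum ℂ !![0, (x : ℂ); y, 0]).Nonempty := by
    rw [spectrum_antidiag]
    exact IsAlgClosed.exists_pow_nat_eq _ two_pos
  rw [specRad, hmap, spectralRadius_eq_of_forall_nnnorm_eq hne hnorm, ENNReal.coe_toReal,
    Real.coe_sqrt, coe_nnnorm, Real.norm_eq_abs]

theorem gsr_eq_and_hasSpectralFiniteness {𝒜 : Set (Matrix (Fin 2) (Fin 2) ℝ)}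
    {M₀ : Matrix (Fin 2) (Fin 2) ℝ} (hM₀ : M₀ ∈ 𝒜)
    (hle : ∀ n, 1 ≤ n → ∀ M ∈ prodsOfLen 𝒜 n, specRad M ≤ specRad M₀ ^ n) :
    gsr 𝒜 = specRad M₀ ∧ hasSpectralFiniteness 𝒜 := by
  have hM₀_mem : M₀ ∈ prodsOfLen 𝒜 1 := ⟨[M₀], rfl, by simpa using hM₀, List.prod_singleton.symm⟩
  have hroot : specRad M₀ ^ ((1 : ℝ) / (1 : ℕ)) = specRad M₀ := by simp
  have hgsr : gsr 𝒜 = specRad M₀ := by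
    refine IsGreatest.csSup_eq ⟨⟨1, le_rfl, M₀, hM₀_mem, hroot.symm⟩, ?_⟩
    rintro _ ⟨n, hn, M, hM, rfl⟩
    calc specRad M ^ ((1 : ℝ) / n) ≤ (specRad M₀ ^ n) ^ ((1 : ℝ) / n) := by
          gcongr; exacts [specRad_nonneg M, hle n hn M hM]
      _ = specRad M₀ := by
          rw [one_div, Real.pow_rpow_inv_natCast (specRad_nonneg M₀) (by omega)]
  exact ⟨hgsr, 1, le_rfl, M₀, hM₀_mem, hgsr.trans hroot.symm⟩

theorem gsr_pair_eq_max_and_hasSpectralFiniteness {A B : Matrix (Fin 2) (Fin 2) ℝ}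
    (hle : ∀ n, 1 ≤ n → ∀ M ∈ prodsOfLen {A, B} n, specRad M ≤ max (specRad A) (specRad B) ^ n) :
    gsr {A, B} = max (specRad A) (specRad B) ∧ hasSpectralFiniteness {A, B} := by
  rcases max_choice (specRad A) (specRad B) with h | h <;> rw [h] at hle ⊢
  · exact gsr_eq_and_hasSpectralFiniteness (Set.mem_insert A {B}) hle
  · exact gsr_eq_and_hasSpectralFiniteness (Set.mem_insert_of_mem A rfl) hle

section BoundedMonomial

variable {b c s t : ℝ} {M : Matrix (Fin 2) (Fin 2) ℝ}

def DiagBoundedBy (s : ℝ) (M : Matrix (Fin 2) (Fin 2) ℝ) : Prop :=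
  ∃ x y, M = !![x, 0; 0, y] ∧ |x| ≤ s ∧ |y| ≤ s

def AntidiagBoundedBy (s b c : ℝ) (M : Matrix (Fin 2) (Fin 2) ℝ) : Prop :=
  ∃ x y, M = !![0, x; y, 0] ∧ |x| ≤ s * |b| ∧ |y| ≤ s * |c|

theorem DiagBoundedBy.diag_mul {l1 l2 : ℝ} (hl1 : |l1| ≤ t) (hl2 : |l2| ≤ t)
    (hM : DiagBoundedBy s M) : DiagBoundedBy (t * s) (!![l1, 0; 0, l2] * M) := by
  obtain ⟨x, y, rfl, hx, hy⟩ := hM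
  have ht : 0 ≤ t := (abs_nonneg l1).trans hl1
  refine ⟨l1 * x, l2 * y, by simp, ?_, ?_⟩ <;> rw [abs_mul]
  · exact mul_le_mul hl1 hx (abs_nonneg x) ht
  · exact mul_le_mul hl2 hy (abs_nonneg y) ht

theorem DiagBoundedBy.antidiag_mul (hM : DiagBoundedBy s M) :
    AntidiagBoundedBy s b c (!![0, b; c, 0] * M) := by
  obtain ⟨x, y, rfl, hx, hy⟩ := hM
  refine ⟨b * y, c * x, by simp, ?_, ?_⟩ <;> rw [abs_mul, mul_comm]
  · exact mul_le_mul_of_nonneg_right hy (abs_nonneg b)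
  · exact mul_le_mul_of_nonneg_right hx (abs_nonneg c)

theorem AntidiagBoundedBy.diag_mul {l1 l2 : ℝ} (hl1 : |l1| ≤ t) (hl2 : |l2| ≤ t)
    (hM : AntidiagBoundedBy s b c M) : AntidiagBoundedBy (t * s) b c (!![l1, 0; 0, l2] * M) := by
  obtain ⟨x, y, rfl, hx, hy⟩ := hM
  have ht : 0 ≤ t := (abs_nonneg l1).trans hl1
  refine ⟨l1 * x, l2 * y, by simp, ?_, ?_⟩ <;> rw [abs_mul, mul_assoc]
  · exact mul_le_mul hl1 hx (abs_nonneg x) ht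
  · exact mul_le_mul hl2 hy (abs_nonneg y) ht

theorem AntidiagBoundedBy.antidiag_mul (hs : 0 ≤ s) (hbc : |b * c| ≤ t)
    (hM : AntidiagBoundedBy s b c M) : DiagBoundedBy (s * t) (!![0, b; c, 0] * M) := by
  obtain ⟨x, y, rfl, hx, hy⟩ := hM
  refine ⟨b * y, c * x, by simp, ?_, ?_⟩
  · calc |b * y| ≤ |b| * (s * |c|) := by rw [abs_mul]; gcongr
      _ = s * |b * c| := by rw [abs_mul]; ring
      _ ≤ s * t := by gcongr
  · calc |c * x| ≤ |c| * (s * |b|) := by rw [abs_mul]; gcongr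
      _ = s * |b * c| := by rw [abs_mul]; ring
      _ ≤ s * t := by gcongr

theorem DiagBoundedBy.specRad_le (hM : DiagBoundedBy s M) : specRad M ≤ s := by
  obtain ⟨x, y, rfl, hx, hy⟩ := hM
  rw [specRad_diag]
  exact max_le hx hy

theorem AntidiagBoundedBy.specRad_le (hs : 0 ≤ s) (ht : 0 ≤ t) (hbc : |b * c| ≤ t ^ 2)
    (hM : AntidiagBoundedBy s b c M) : specRad M ≤ s * t := by
  obtain ⟨x, y, rfl, hx, hy⟩ := hM
  rw [specRad_antidiag, Real.sqrt_le_left (by positivity)]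
  calc |x * y| ≤ s * |b| * (s * |c|) := by rw [abs_mul]; gcongr
    _ = s ^ 2 * |b * c| := by rw [abs_mul]; ring
    _ ≤ (s * t) ^ 2 := by rw [mul_pow]; gcongr

end BoundedMonomial

section DiagAntidiagProducts

variable {l1 l2 b c r : ℝ} {n : ℕ} {M : Matrix (Fin 2) (Fin 2) ℝ}

theorem diag_or_antidiag_of_mem_prodsOfLen (hl1 : |l1| ≤ r) (hl2 : |l2| ≤ r)
    (hbc : |b * c| ≤ r ^ 2) (hM : M ∈ prodsOfLen {!![l1, 0; 0, l2], !![0, b; c, 0]} n) :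
    DiagBoundedBy (r ^ n) M ∨ ∃ m, n = m + 1 ∧ AntidiagBoundedBy (r ^ m) b c M := by
  have hr : 0 ≤ r := (abs_nonneg l1).trans hl1
  induction n generalizing M with
  | zero =>
    rw [prodsOfLen_zero, Set.mem_singleton_iff] at hM
    exact .inl ⟨1, 1, by rw [hM, one_fin_two], by simp, by simp⟩
  | succ n ih =>
    obtain ⟨X, hX, N, hN, rfl⟩ := (prodsOfLen_succ _ n).subset hM
    rcases hX with rfl | rfl
    · rcases ih hN with hD | ⟨m, rfl, hAD⟩
      · exact .inl (by rw [pow_succ']; exact hD.diag_mul hl1 hl2)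
      · exact .inr ⟨m + 1, rfl, by rw [pow_succ']; exact hAD.diag_mul hl1 hl2⟩
    · rcases ih hN with hD | ⟨m, rfl, hAD⟩
      · exact .inr ⟨n, rfl, hD.antidiag_mul⟩
      · refine .inl ?_
        rw [show r ^ (m + 1 + 1) = r ^ m * r ^ 2 by ring]
        exact hAD.antidiag_mul (by positivity) hbc

theorem specRad_le_pow_of_mem_prodsOfLen (hl1 : |l1| ≤ r) (hl2 : |l2| ≤ r)
    (hbc : |b * c| ≤ r ^ 2) (hM : M ∈ prodsOfLen {!![l1, 0; 0, l2], !![0, b; c, 0]} n) :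
    specRad M ≤ r ^ n := by
  have hr : 0 ≤ r := (abs_nonneg l1).trans hl1
  rcases diag_or_antidiag_of_mem_prodsOfLen hl1 hl2 hbc hM with hD | ⟨m, rfl, hAD⟩
  · exact hD.specRad_le
  · exact pow_succ r m ▸ hAD.specRad_le (by positivity) hr hbc

end DiagAntidiagProducts

/-- for a diagonal `A = diag(λ₁, λ₂)` and an antidiagonal
`B = !![0, b; c, 0]`, the generalized spectral radius of `{A, B}` equals
`max {ρ(A), ρ(B)} = max {|λ₁|, |λ₂|, √|b*c|}`; in particular `{A, B}` has the
spectral finiteness property. -/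
theorem gsr_diagonal_and_antidiagonal
    (l1 l2 b c : ℝ)
    (A B : Matrix (Fin 2) (Fin 2) ℝ)
    (hA : A = !![l1, 0; 0, l2]) (hB : B = !![0, b; c, 0]) :
    gsr {A, B} = max (specRad A) (specRad B) ∧
      max (specRad A) (specRad B) = max (max |l1| |l2|) (Real.sqrt |b * c|) ∧
      hasSpectralFiniteness {A, B} := by
  subst hA hB
  have hmax : max (specRad !![l1, 0; 0, l2]) (specRad !![0, b; c, 0]) =
      max (max |l1| |l2|) √|b * c| := by
    rw [specRad_diag, specRad_antidiag]
  set r := max (max |l1| |l2|) √|b * c|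
  have hl1 : |l1| ≤ r := (le_max_left _ _).trans (le_max_left _ _)
  have hl2 : |l2| ≤ r := (le_max_right _ _).trans (le_max_left _ _)
  have hbc : |b * c| ≤ r ^ 2 :=
    (Real.sqrt_le_left ((abs_nonneg l1).trans hl1)).1 (le_max_right _ _)
  obtain ⟨hgsr, hfin⟩ := gsr_pair_eq_max_and_hasSpectralFiniteness fun n _ M hM =>
    hmax ▸ specRad_le_pow_of_mem_prodsOfLen hl1 hl2 hbc hM
  exact ⟨hgsr, hmax, hfin⟩
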